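/- Let λ > 0 and let B_0 be a CBF for the tightened state constraint h(x) + λ ≤ 0 satisfying h(x) + λ ≤ B_0(x) for all x ∈ S_{B_0}. Define B_k(x) as the minimum over input sequences in U^k of max{ max_{0 ≤ t ≤ k-1} (h(x_t) + λ), B_0(x_k) }. Then B_k is a CBF for the tightened constraint: h(x) + λ ≤ B_k(x) ≤ 0 implies h(x) + λ ≤ 0, and for every x with B_k(x) ≤ 0 there exists u ∈ U with B_k(f(x,u)) ≤ 0. -/
import Mathlib


/-- Closed-loop trajectory: x_0 = x, x_{t+1} = f(x_t, u_t). -/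
def traj {σ υ : Type*} (f : σ → υ → σ) (x : σ) (u : ℕ → υ) : ℕ → σ
  | 0 => x
  | t + 1 => f (traj f x u t) (u t)

/-- Cost max{ max_{0 ≤ t ≤ k-1} (h(x_t) + λ), B_0(x_k) }. -/
noncomputable def reachCostTight {σ υ : Type*} (f : σ → υ → σ) (h B0 : σ → ℝ)
    (lam : ℝ) (k : ℕ) (x : σ) (u : ℕ → υ) : ℝ :=
  max (⨆ t : Fin k, (h (traj f x u t) + lam)) (B0 (traj f x u k))

lemma traj_congr {σ υ : Type*} (f : σ → υ → σ) (x : σ) (u v : ℕ → υ) :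
    ∀ t, (∀ s < t, u s = v s) → traj f x u t = traj f x v t := by
  intro t
  induction t with
  | zero => intro _; rfl
  | succ n ih =>
    intro hs
    simp [traj, ih (fun s hs' => hs s (Nat.lt_succ_of_lt hs')), hs n (Nat.lt_succ_self n)]

lemma traj_shift {σ υ : Type*} (f : σ → υ → σ) (x : σ) (u : ℕ → υ) :
    ∀ t, traj f (f x (u 0)) (fun s => u (s + 1)) t = traj f x u (t + 1) := by
  intro t
  induction t with
  | zero => rfl
  | succ n ih => simp [traj, ih]

/-- if λ > 0 and B_0 is a CBF for the tightened constraint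
h + λ ≤ 0 with h + λ ≤ B_0 on S_{B_0}, then B_k (the attained minimum of the
reachability cost) is a CBF for the tightened constraint. -/
theorem reachability_generates_tightened_cbf
    {σ υ : Type*} (f : σ → υ → σ) (h : σ → ℝ) (U : Set υ) (B0 : σ → ℝ)
    (lam : ℝ) (hlam : 0 < lam) (k : ℕ) (hk : 1 ≤ k)
    -- B_0 is a CBF for the tightened constraint:
    (hSB0_ne : {x : σ | B0 x ≤ 0}.Nonempty)
    (hSB0_tight : ∀ x, B0 x ≤ 0 → h x + lam ≤ B0 x)
    (hSB0_feas : ∀ x, B0 x ≤ 0 → ∃ u ∈ U, B0 (f x u) ≤ 0)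
    -- B_k is the attained minimum of the reachability cost:
    (Bk : σ → ℝ)
    (hBk_att : ∀ x : σ, ∃ u : ℕ → υ, (∀ t, u t ∈ U) ∧
      Bk x = reachCostTight f h B0 lam k x u)
    (hBk_lb : ∀ (x : σ) (u : ℕ → υ), (∀ t, u t ∈ U) →
      Bk x ≤ reachCostTight f h B0 lam k x u) :
    ∀ x, Bk x ≤ 0 →
      (h x + lam ≤ Bk x ∧ h x + lam ≤ 0) ∧ ∃ u ∈ U, Bk (f x u) ≤ 0 := by
  intro x hx
  have hpos : 0 < k := hk
  haveI : Nonempty (Fin k) := ⟨⟨0, hpos⟩⟩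
  obtain ⟨u, hu, hBk⟩ := hBk_att x
  have hcost : reachCostTight f h B0 lam k x u ≤ 0 := hBk ▸ hx
  have hsup : (⨆ t : Fin k, (h (traj f x u t) + lam)) ≤ 0 :=
    le_trans (le_max_left _ _) hcost
  have hB0k : B0 (traj f x u k) ≤ 0 := le_trans (le_max_right _ _) hcost
  have hterm : ∀ t : Fin k, h (traj f x u t) + lam ≤ 0 := fun t =>
    le_trans (le_ciSup (f := fun t : Fin k => h (traj f x u t) + lam) (Set.Finite.bddAbove (Set.finite_range _)) t) hsup
  have h0 : h x + lam ≤ Bk x := by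
    rw [hBk]
    refine le_trans ?_ (le_max_left _ _)
    exact le_ciSup (f := fun t : Fin k => h (traj f x u t) + lam) (Set.Finite.bddAbove (Set.finite_range _)) (⟨0, hpos⟩ : Fin k)
  refine ⟨⟨h0, h0.trans hx⟩, ?_⟩
  obtain ⟨u', hu', hB0'⟩ := hSB0_feas _ hB0k
  set u₁ : ℕ → υ := fun s => if s + 1 < k then u (s + 1) else u' with hu₁def
  have hu₁ : ∀ t, u₁ t ∈ U := by
    intro t
    by_cases hc : t + 1 < k <;> simp [hu₁def, hc, hu, hu']
  have htraj : ∀ t : ℕ, t < k → traj f (f x (u 0)) u₁ t = traj f x u (t + 1) := by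
    intro t ht
    have : traj f (f x (u 0)) u₁ t = traj f (f x (u 0)) (fun s => u (s + 1)) t := by
      apply traj_congr
      intro s hs
      have : s + 1 < k := lt_of_le_of_lt (Nat.succ_le_of_lt hs) ht
      simp [hu₁def, this]
    rw [this, traj_shift]
  have hk1 : k - 1 + 1 = k := Nat.succ_pred_eq_of_pos hpos
  have htrajk : traj f (f x (u 0)) u₁ k = f (traj f x u k) u' := by
    conv_lhs => rw [← hk1]
    show f (traj f (f x (u 0)) u₁ (k - 1)) (u₁ (k - 1)) = _
    rw [htraj (k - 1) (Nat.sub_lt hpos one_pos), hk1]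
    have : ¬ (k - 1 + 1 < k) := by omega
    simp [hu₁def, this]
  refine ⟨u 0, hu 0, ?_⟩
  have key : reachCostTight f h B0 lam k (f x (u 0)) u₁ ≤ 0 := by
    apply max_le
    · apply ciSup_le
      intro t
      rw [htraj t t.isLt]
      rcases lt_or_eq_of_le (Nat.succ_le_of_lt t.isLt) with hc | hc
      · exact hterm ⟨t + 1, hc⟩
      · rw [show (t : ℕ) + 1 = k from hc]
        exact le_trans (hSB0_tight _ hB0k) hB0k
    · rw [htrajk]; exact hB0'
  exact le_trans (hBk_lb _ u₁ hu₁) key
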